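/- Assume d₁r₁ > d₂r₂k₂, where k₂ = (1+b₂)/(1−b₁b₂). Let φ₁, φ₂ : ℝ → ℝ be continuous, compactly supported, with 0 ≤ φ_i(x) < k_i for all x (i = 1,2), and let (u₁, u₂) be a classical solution of the Lotka–Volterra cooperative system with initial data (φ₁, φ₂) taking nonnegative values. Then 0 ≤ u_i(t,x) ≤ k_i for all t ≥ 0, x ∈ ℝ, and for every ε > 0, lim_{t→∞} sup_{|x| ≥ (2√(d₂r₂k₂)+ε)t} u₂(t,x) = 0. -/

import Mathlib

/-!
Both claims are comparison arguments. The equilibrium `(k₁, k₂)` is a constant supersolution of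
the cooperative system, so `u ≤ k`. Consequently `u₂` is a subsolution of the linear equation
`∂ₜw = d₂ ∂ₓₓw + r₂k₂ w`, which is solved by the exponentials `A e^{κ(ct ∓ x)}` with
`c = 2√(d₂r₂k₂)` and `κ = c / 2d₂`. Such exponentials dominate the compactly supported initial
datum, hence `u₂ ≤ A e^{κ(ct - |x|)}`, which decays like `e^{-κεt}` on `|x| ≥ (c + ε)t`.

The comparison principle is proved by the classical first-contact argument: if `u - v` ever
reaches the penalty `δ(1 + x²)e^{Lt}`, then at the first contact the parabolic inequalities are
violated, and `δ → 0` gives `u ≤ v`.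
-/

open Real Set Filter Topology MeasureTheory

/-- Partial derivative in time of a function `u : ℝ → ℝ → ℝ` (time, then space). -/
noncomputable def pdT (u : ℝ → ℝ → ℝ) (t x : ℝ) : ℝ := deriv (fun s => u s x) t

/-- Second partial derivative in space of a function `u : ℝ → ℝ → ℝ`. -/
noncomputable def pdXX (u : ℝ → ℝ → ℝ) (t x : ℝ) : ℝ := deriv (deriv (u t)) x

/-- A function `u : [0,∞) × ℝ → ℝ` (encoded as a total function) which is bounded and
uniformly continuous on `[0,∞) × ℝ`, continuously differentiable in `t` and twice
continuously differentiable in `x` on `(0,∞) × ℝ`. -/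
structure RegularFn (u : ℝ → ℝ → ℝ) : Prop where
  bounded : ∃ M : ℝ, ∀ t x : ℝ, 0 ≤ t → |u t x| ≤ M
  unifCont : UniformContinuousOn (fun p : ℝ × ℝ => u p.1 p.2) (Ici 0 ×ˢ (univ : Set ℝ))
  contT : ∀ x : ℝ, ContDiffOn ℝ 1 (fun s => u s x) (Ioi 0)
  contX : ∀ t : ℝ, 0 < t → ContDiff ℝ 2 (u t)

/-- `(u₁, u₂)` is a classical solution of the Lotka–Volterra cooperative system
`∂u₁/∂t = d₁ ∂²u₁/∂x² + r₁u₁(1 − u₁ + b₁u₂)`,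
`∂u₂/∂t = d₂ ∂²u₂/∂x² + r₂u₂(1 − u₂ + b₂u₁)`
with initial data `(φ₁, φ₂)`. -/
structure IsLVSolution (d₁ d₂ r₁ r₂ b₁ b₂ : ℝ) (φ₁ φ₂ : ℝ → ℝ) (u₁ u₂ : ℝ → ℝ → ℝ) : Prop where
  reg1 : RegularFn u₁
  reg2 : RegularFn u₂
  pde1 : ∀ t x : ℝ, 0 < t →
    pdT u₁ t x = d₁ * pdXX u₁ t x + r₁ * u₁ t x * (1 - u₁ t x + b₁ * u₂ t x)
  pde2 : ∀ t x : ℝ, 0 < t →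
    pdT u₂ t x = d₂ * pdXX u₂ t x + r₂ * u₂ t x * (1 - u₂ t x + b₂ * u₁ t x)
  init1 : ∀ x : ℝ, u₁ 0 x = φ₁ x
  init2 : ∀ x : ℝ, u₂ 0 x = φ₂ x

open Function

theorem HasDerivAt.nonneg_of_le_left {f : ℝ → ℝ} {f' a : ℝ} (hf : HasDerivAt f f' a)
    (h : ∀ᶠ s in 𝓝[<] a, f s ≤ f a) : 0 ≤ f' := by
  have hslope : Tendsto (slope f a) (𝓝[<] a) (𝓝 f') :=
    (hasDerivAt_iff_tendsto_slope.1 hf).mono_left (nhdsWithin_mono _ fun _ hs => ne_of_lt hs)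
  refine ge_of_tendsto hslope ?_
  filter_upwards [h, self_mem_nhdsWithin] with s hs hsa
  rw [slope_def_field]
  exact div_nonneg_of_nonpos (sub_nonpos.2 hs) (sub_nonpos.2 (le_of_lt hsa))

theorem IsLocalMax.deriv_deriv_nonpos {f : ℝ → ℝ} {a : ℝ} (h : IsLocalMax f a)
    (hc : ContinuousAt f a) : deriv (deriv f) a ≤ 0 := by
  by_contra! hpos
  have hmin : IsLocalMin f a := isLocalMin_of_deriv_deriv_pos hpos h.deriv_eq_zero hc
  have hconst : deriv f =ᶠ[𝓝 a] fun _ => 0 := by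
    have : f =ᶠ[𝓝 a] fun _ => f a := by
      filter_upwards [h, hmin] with x hx hx' using le_antisymm hx hx'
    simpa using this.deriv
  simp [hconst.deriv_eq] at hpos

theorem deriv_deriv_sub {f g : ℝ → ℝ} (hf : ContDiff ℝ 2 f) (hg : ContDiff ℝ 2 g) (x : ℝ) :
    deriv (deriv fun y => f y - g y) x = deriv (deriv f) x - deriv (deriv g) x := by
  simpa [iteratedDeriv_eq_iterate] using iteratedDeriv_fun_sub (n := 2) hf.contDiffAt hg.contDiffAt

/-- Dominates any bounded function for large `|x|`, and is a strict supersolution of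
`∂ₜw = d ∂ₓₓw + C w` when `L > C + 2d`. -/
noncomputable def penalty (δ L t x : ℝ) : ℝ := δ * (1 + x ^ 2) * exp (L * t)

theorem penalty_pos {δ : ℝ} (hδ : 0 < δ) (L t x : ℝ) : 0 < penalty δ L t x := by
  unfold penalty; positivity

theorem continuous_penalty (δ L : ℝ) : Continuous (uncurry (penalty δ L)) := by
  unfold penalty uncurry; fun_prop

theorem contDiff_penalty (δ L t : ℝ) : ContDiff ℝ 2 (penalty δ L t) := by
  unfold penalty; fun_prop

theorem hasDerivAt_penalty_time (δ L t x : ℝ) :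
    HasDerivAt (fun s => penalty δ L s x) (L * penalty δ L t x) t := by
  have h := (((hasDerivAt_id' t).const_mul L).exp).const_mul (δ * (1 + x ^ 2))
  exact h.congr_deriv (by rw [penalty]; ring)

theorem deriv_deriv_penalty (δ L t x : ℝ) :
    deriv (deriv (penalty δ L t)) x = 2 * δ * exp (L * t) := by
  have h1 : deriv (penalty δ L t) = fun y => 2 * δ * exp (L * t) * y := by
    funext y
    have := (((hasDerivAt_pow 2 y).const_add 1).const_mul δ).mul_const (exp (L * t))
    change deriv (fun y => δ * (1 + y ^ 2) * exp (L * t)) y = _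
    rw [this.deriv]
    ring
  rw [h1]
  simp

theorem exists_lt_penalty {δ L : ℝ} (hδ : 0 < δ) (hL : 0 ≤ L) (M : ℝ) :
    ∃ R, ∀ t x, 0 ≤ t → R ≤ |x| → M < penalty δ L t x := by
  refine ⟨|M| / δ + 1, fun t x ht hx => ?_⟩
  have hx1 : 1 ≤ |x| := le_trans (by simp; positivity) hx
  have hxx : |M| / δ < x ^ 2 := by
    rw [← sq_abs]; nlinarith
  have hMx : M < δ * x ^ 2 := by
    rw [div_lt_iff₀ hδ] at hxx; linarith [le_abs_self M]
  have he : 1 ≤ exp (L * t) := one_le_exp (mul_nonneg hL ht)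
  have hpos : 0 ≤ δ * (1 + x ^ 2) := by positivity
  calc M < δ * (1 + x ^ 2) := by linarith
    _ ≤ penalty δ L t x := le_mul_of_one_le_right hpos he

theorem exists_first_zero {ι : Type*} [Finite ι] {f : ι → ℝ → ℝ → ℝ}
    (hf : ∀ i, ContinuousOn (uncurry (f i)) (Ici 0 ×ˢ univ)) (h0 : ∀ i x, f i 0 x < 0)
    (hfar : ∀ i, ∃ R, ∀ t x, 0 ≤ t → R ≤ |x| → f i t x < 0)
    {i₀ : ι} {t₀ x₀ : ℝ} (ht₀ : 0 ≤ t₀) (hi₀ : 0 ≤ f i₀ t₀ x₀) :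
    ∃ i t x, 0 < t ∧ f i t x = 0 ∧ ∀ j, ∀ s ∈ Icc 0 t, ∀ y, f j s y ≤ 0 := by
  choose R hR using hfar
  set K : ι → Set (ℝ × ℝ) := fun i => Icc 0 t₀ ×ˢ Icc (-R i) (R i)
  set S : Set (ℝ × ℝ) := ⋃ i, K i ∩ uncurry (f i) ⁻¹' Ici 0
  have hmemS : ∀ i s y, 0 ≤ s → s ≤ t₀ → 0 ≤ f i s y → (s, y) ∈ S := by
    intro i s y hs hst hfy
    have hy : |y| ≤ R i := le_of_not_ge fun h => (hR i s y hs h).not_ge hfy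
    exact mem_iUnion.2 ⟨i, ⟨⟨hs, hst⟩, abs_le.1 hy⟩, hfy⟩
  have hS : IsCompact S := isCompact_iUnion fun i =>
    (isCompact_Icc.prod isCompact_Icc).of_isClosed_subset
      (((hf i).mono (prod_mono Icc_subset_Ici_self (subset_univ _))).preimage_isClosed_of_isClosed
        (isClosed_Icc.prod isClosed_Icc) isClosed_Ici) inter_subset_left
  obtain ⟨⟨t, x⟩, hzS, hzmin⟩ :=
    hS.exists_isMinOn ⟨_, hmemS i₀ t₀ x₀ ht₀ le_rfl hi₀⟩ continuous_fst.continuousOn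
  obtain ⟨i, ⟨⟨ht0, htt₀⟩, -⟩, hi⟩ := mem_iUnion.1 hzS
  have hbefore : ∀ j, ∀ s ∈ Ico 0 t, ∀ y, f j s y < 0 := fun j s hs y =>
    lt_of_not_ge fun h =>
      (isMinOn_iff.1 hzmin _ (hmemS j s y hs.1 (hs.2.le.trans htt₀) h)).not_gt hs.2
  have htpos : 0 < t := ht0.lt_of_ne fun h => (h0 i x).not_ge (h ▸ hi)
  have hat : ∀ j y, f j t y ≤ 0 := by
    intro j y
    have hcont : ContinuousAt (uncurry (f j) ∘ fun s => (s, y)) t :=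
      ((hf j).continuousAt (x := (t, y)) (prod_mem_nhds (Ici_mem_nhds htpos) univ_mem)).comp
        (f := fun s => (s, y)) (by fun_prop)
    refine le_of_tendsto (hcont.tendsto.mono_left (nhdsWithin_le_nhds (s := Iio t))) ?_
    filter_upwards [Ioo_mem_nhdsLT htpos] with s hs using (hbefore j s ⟨hs.1.le, hs.2⟩ y).le
  refine ⟨i, t, x, htpos, le_antisymm (hat i x) hi, fun j s hs y => ?_⟩
  rcases hs.2.lt_or_eq with h | rfl
  · exact (hbefore j s ⟨hs.1, h⟩ y).le
  · exact hat j y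

/-- At a contact point `∂ₜw ≥ L · penalty` and `∂ₓₓw ≤ 2δe^{Lt} ≤ 2 · penalty`, which is
incompatible with `∂ₜw ≤ d ∂ₓₓw + C · penalty` once `L > C + 2d`. -/
theorem not_first_contact_penalty {w : ℝ → ℝ → ℝ} {d C δ L t x : ℝ} (hd : 0 ≤ d) (hδ : 0 < δ)
    (hL : C + 2 * d < L) (hwt : DifferentiableAt ℝ (fun s => w s x) t)
    (hwx : ContDiff ℝ 2 (w t))
    (hleft : ∀ᶠ s in 𝓝[<] t, w s x - penalty δ L s x ≤ w t x - penalty δ L t x)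
    (hmax : IsLocalMax (fun y => w t y - penalty δ L t y) x)
    (hpde : pdT w t x ≤ d * pdXX w t x + C * penalty δ L t x) : False := by
  have htime : L * penalty δ L t x ≤ pdT w t x :=
    sub_nonneg.1 ((hwt.hasDerivAt.sub (hasDerivAt_penalty_time δ L t x)).nonneg_of_le_left hleft)
  have hspace : pdXX w t x ≤ 2 * δ * exp (L * t) := by
    have := hmax.deriv_deriv_nonpos
      ((hwx.continuous.sub (contDiff_penalty δ L t).continuous).continuousAt)
    rw [deriv_deriv_sub hwx (contDiff_penalty δ L t), deriv_deriv_penalty] at this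
    exact sub_nonpos.1 this
  have hsmall : δ * exp (L * t) ≤ penalty δ L t x := by
    rw [penalty, mul_assoc]
    exact mul_le_mul_of_nonneg_left (le_mul_of_one_le_left (exp_pos _).le
      (le_add_of_nonneg_right (sq_nonneg x))) hδ.le
  have hP := penalty_pos hδ L t x
  nlinarith

theorem RegularFn.differentiableAt_time {u : ℝ → ℝ → ℝ} (hu : RegularFn u) {t : ℝ} (ht : 0 < t)
    (x : ℝ) : DifferentiableAt ℝ (fun s => u s x) t :=
  ((hu.contT x).differentiableOn one_ne_zero t ht).differentiableAt (Ioi_mem_nhds ht)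

section Comparison

variable {ι : Type*} [Fintype ι] {u v : ι → ℝ → ℝ → ℝ} {d C : ι → ℝ}

theorem sub_lt_penalty_of_comparison (hd : ∀ i, 0 ≤ d i) (hu : ∀ i, RegularFn (u i))
    (hv : ∀ i, ContDiff ℝ 2 (uncurry (v i))) (hvb : ∀ i, ∃ m, ∀ t x, 0 ≤ t → m ≤ v i t x)
    (h0 : ∀ i x, u i 0 x ≤ v i 0 x)
    (hcontact : ∀ i t x μ, 0 < t → 0 < μ → u i t x = v i t x + μ →
      (∀ j, u j t x ≤ v j t x + μ) →
      pdT (u i) t x - d i * pdXX (u i) t x ≤ pdT (v i) t x - d i * pdXX (v i) t x + C i * μ)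
    {δ L : ℝ} (hδ : 0 < δ) (hL : ∀ i, C i + 2 * d i < L) (hL0 : 0 ≤ L)
    (i : ι) {t : ℝ} (ht : 0 ≤ t) (x : ℝ) : u i t x - v i t x < penalty δ L t x := by
  have hvt : ∀ j s y, DifferentiableAt ℝ (fun r => v j r y) s := fun j s y =>
    ((hv j).differentiable two_ne_zero).differentiableAt.comp (f := fun r => (r, y)) s
      (by fun_prop)
  have hvx : ∀ j s, ContDiff ℝ 2 (v j s) := fun j s =>
    (hv j).comp (contDiff_const.prodMk contDiff_id)
  have hfar : ∀ j, ∃ R, ∀ s y, 0 ≤ s → R ≤ |y| → u j s y - v j s y - penalty δ L s y < 0 := by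
    intro j
    obtain ⟨M, hM⟩ := (hu j).bounded
    obtain ⟨m, hm⟩ := hvb j
    obtain ⟨R, hR⟩ := exists_lt_penalty hδ hL0 (M - m)
    exact ⟨R, fun s y hs hy => by
      linarith [hR s y hs hy, hm s y hs, (le_abs_self _).trans (hM s y hs)]⟩
  by_contra! hbad
  obtain ⟨j, s, y, hs, hzero, hbelow⟩ :=
    exists_first_zero (f := fun j s y => u j s y - v j s y - penalty δ L s y)
      (fun j => (((hu j).unifCont.continuousOn.sub (hv j).continuous.continuousOn).sub
        (continuous_penalty δ L).continuousOn))
      (fun j y => by linarith [h0 j y, penalty_pos hδ L 0 y])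
      hfar ht (sub_nonneg.2 hbad)
  have hcontact_j := hcontact j s y (penalty δ L s y) hs (penalty_pos hδ L s y)
    (by linarith) (fun k => by linarith [hbelow k s ⟨hs.le, le_rfl⟩ y])
  refine not_first_contact_penalty (w := fun s y => u j s y - v j s y) (hd j) hδ (hL j)
    (((hu j).differentiableAt_time hs y).sub (hvt j s y)) (((hu j).contX s hs).sub (hvx j s))
    ?_ (Filter.Eventually.of_forall fun z => ?_) ?_
  · filter_upwards [Ioo_mem_nhdsLT hs] with r hr
    linarith [hbelow j r ⟨hr.1.le, hr.2.le⟩ y]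
  · linarith [hbelow j s ⟨hs.le, le_rfl⟩ z]
  · rw [pdT, deriv_fun_sub ((hu j).differentiableAt_time hs y) (hvt j s y), pdXX,
      deriv_deriv_sub ((hu j).contX s hs) (hvx j s)]
    simp only [pdT, pdXX] at hcontact_j
    linarith

theorem le_of_cooperative_comparison (hd : ∀ i, 0 ≤ d i) (hu : ∀ i, RegularFn (u i))
    (hv : ∀ i, ContDiff ℝ 2 (uncurry (v i))) (hvb : ∀ i, ∃ m, ∀ t x, 0 ≤ t → m ≤ v i t x)
    (h0 : ∀ i x, u i 0 x ≤ v i 0 x)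
    (hcontact : ∀ i t x μ, 0 < t → 0 < μ → u i t x = v i t x + μ →
      (∀ j, u j t x ≤ v j t x + μ) →
      pdT (u i) t x - d i * pdXX (u i) t x ≤ pdT (v i) t x - d i * pdXX (v i) t x + C i * μ)
    (i : ι) {t : ℝ} (ht : 0 ≤ t) (x : ℝ) : u i t x ≤ v i t x := by
  set L := ∑ j, (|C j| + 2 * d j) + 1
  have hterm : ∀ j, 0 ≤ |C j| + 2 * d j := fun j => by linarith [abs_nonneg (C j), hd j]
  have hL : ∀ j, C j + 2 * d j < L := fun j => by
    linarith [le_abs_self (C j), Finset.single_le_sum (fun k _ => hterm k) (Finset.mem_univ j)]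
  have hL0 : 0 ≤ L := by linarith [Finset.sum_nonneg fun k (_ : k ∈ Finset.univ) => hterm k]
  refine sub_nonpos.1 (le_of_forall_pos_lt_add fun ε hε => ?_)
  have hc : 0 < (1 + x ^ 2) * exp (L * t) := by positivity
  have := sub_lt_penalty_of_comparison hd hu hv hvb h0 hcontact
    (div_pos hε hc) hL hL0 i ht x
  rwa [penalty, mul_assoc, div_mul_cancel₀ _ hc.ne', ← zero_add ε] at this

end Comparison

theorem pdT_const (c t x : ℝ) : pdT (fun _ _ => c) t x = 0 := deriv_const t c

theorem pdXX_const (c t x : ℝ) : pdXX (fun _ _ => c) t x = 0 := by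
  simp [pdXX]

theorem pdT_mul_exp (A p q t x : ℝ) :
    pdT (fun t x => A * exp (p * t + q * x)) t x = p * (A * exp (p * t + q * x)) := by
  have h := ((((hasDerivAt_id' t).const_mul p).add_const (q * x)).exp).const_mul A
  rw [pdT, h.deriv]
  ring

theorem pdXX_mul_exp (A p q t x : ℝ) :
    pdXX (fun t x => A * exp (p * t + q * x)) t x = q ^ 2 * (A * exp (p * t + q * x)) := by
  have hd : ∀ B y,
      HasDerivAt (fun y => B * exp (p * t + q * y)) (q * (B * exp (p * t + q * y))) y :=
    fun B y => (((((hasDerivAt_id' y).const_mul q).const_add (p * t)).exp).const_mul B).congr_deriv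
      (by ring)
  have h1 : deriv (fun y => A * exp (p * t + q * y)) = fun y => q * A * exp (p * t + q * y) :=
    funext fun y => (hd A y).deriv.trans (by ring)
  rw [pdXX, h1, (hd (q * A) x).deriv]
  ring

theorem le_mul_exp_of_pdT_le {u : ℝ → ℝ → ℝ} {d ρ A p q : ℝ} (hd : 0 ≤ d) (hu : RegularFn u)
    (hpde : ∀ t x, 0 < t → pdT u t x ≤ d * pdXX u t x + ρ * u t x) (hp : ρ + d * q ^ 2 ≤ p)
    (hA : 0 ≤ A) (h0 : ∀ x, u 0 x ≤ A * exp (q * x)) {t : ℝ} (ht : 0 ≤ t) (x : ℝ) :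
    u t x ≤ A * exp (p * t + q * x) := by
  refine le_of_cooperative_comparison (ι := Unit) (u := fun _ => u)
    (v := fun _ t x => A * exp (p * t + q * x)) (d := fun _ => d) (C := fun _ => ρ)
    (fun _ => hd) (fun _ => hu) (fun _ => by unfold uncurry; fun_prop)
    (fun _ => ⟨0, fun _ _ _ => by positivity⟩) (fun _ x => by simpa using h0 x)
    (fun _ t x μ ht hμ hcon _ => ?_) () ht x
  have hv : 0 ≤ A * exp (p * t + q * x) := by positivity
  have h := hpde t x ht
  rw [hcon] at h
  rw [pdT_mul_exp, pdXX_mul_exp]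
  nlinarith [mul_le_mul_of_nonneg_right hp hv]

theorem le_mul_exp_sub_abs_of_pdT_le {u : ℝ → ℝ → ℝ} {d ρ A κ p : ℝ} (hd : 0 ≤ d)
    (hu : RegularFn u) (hpde : ∀ t x, 0 < t → pdT u t x ≤ d * pdXX u t x + ρ * u t x)
    (hp : ρ + d * κ ^ 2 ≤ p) (hκ : 0 ≤ κ) (hA : 0 ≤ A) (h0 : ∀ x, u 0 x ≤ A * exp (-(κ * |x|)))
    {t : ℝ} (ht : 0 ≤ t) (x : ℝ) : u t x ≤ A * exp (p * t - κ * |x|) := by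
  have hbarrier : ∀ q, q ^ 2 = κ ^ 2 → (∀ y, -(κ * |y|) ≤ q * y) →
      u t x ≤ A * exp (p * t + q * x) :=
    fun q hq hqy => le_mul_exp_of_pdT_le hd hu hpde (hq ▸ hp) hA
      (fun y => (h0 y).trans (by gcongr; exact hqy y)) ht x
  rcases le_total 0 x with hx | hx
  · simpa [abs_of_nonneg hx, sub_eq_add_neg] using
      hbarrier (-κ) (neg_sq κ) fun y => by nlinarith [le_abs_self y]
  · simpa [abs_of_nonpos hx, sub_eq_add_neg] using
      hbarrier κ rfl fun y => by nlinarith [neg_abs_le y]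

theorem HasCompactSupport.exists_le_mul_exp_neg_abs {φ : ℝ → ℝ} (hφ : HasCompactSupport φ)
    {K κ : ℝ} (hK : ∀ x, φ x ≤ K) (hκ : 0 ≤ κ) : ∃ A, 0 ≤ A ∧ ∀ x, φ x ≤ A * exp (-(κ * |x|)) := by
  obtain ⟨R, hR⟩ := hφ.isBounded.subset_closedBall 0
  obtain ⟨x₀, hx₀⟩ := nonempty_compl.2 hφ.isCompact.ne_univ
  have hK0 : 0 ≤ K := (image_eq_zero_of_notMem_tsupport hx₀).symm.trans_le (hK x₀)
  refine ⟨K * exp (κ * R), by positivity, fun x => ?_⟩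
  by_cases hx : x ∈ tsupport φ
  · have hxR : |x| ≤ R := by simpa using hR hx
    calc φ x ≤ K := hK x
      _ ≤ K * exp (κ * R - κ * |x|) :=
        le_mul_of_one_le_right hK0 (one_le_exp (by nlinarith))
      _ = K * exp (κ * R) * exp (-(κ * |x|)) := by rw [mul_assoc, ← exp_add]; ring_nf
  · rw [image_eq_zero_of_notMem_tsupport hx]
    positivity

theorem tendsto_sSup_image_of_le {α : Type*} {l : Filter α} {f : α → ℝ → ℝ} {s : α → Set ℝ}
    {g : α → ℝ} (hne : ∀ a, (s a).Nonempty) (hnn : ∀ᶠ a in l, ∀ x ∈ s a, 0 ≤ f a x)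
    (hle : ∀ᶠ a in l, ∀ x ∈ s a, f a x ≤ g a) (hg : Tendsto g l (𝓝 0)) :
    Tendsto (fun a => sSup (f a '' s a)) l (𝓝 0) := by
  refine squeeze_zero' ?_ ?_ hg
  · filter_upwards [hnn, hle] with a ha ha'
    obtain ⟨x, hx⟩ := hne a
    exact (ha x hx).trans (le_csSup ⟨g a, forall_mem_image.2 ha'⟩ (mem_image_of_mem _ hx))
  · filter_upwards [hle] with a ha
    exact csSup_le ((hne a).image _) (forall_mem_image.2 ha)

theorem reaction_le_of_contact {r b k k' M u v μ : ℝ} (hr : 0 ≤ r) (hb : 0 ≤ b)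
    (hk : 1 + b * k' ≤ k) (hu0 : 0 ≤ u) (huM : u ≤ M) (hu : u = k + μ) (hv : v ≤ k' + μ)
    (hμ : 0 ≤ μ) : r * u * (1 - u + b * v) ≤ r * M * b * μ := by
  have hfac : 1 - u + b * v ≤ b * μ := by nlinarith [mul_le_mul_of_nonneg_left hv hb]
  calc r * u * (1 - u + b * v) ≤ r * u * (b * μ) :=
        mul_le_mul_of_nonneg_left hfac (mul_nonneg hr hu0)
    _ ≤ r * M * (b * μ) := by gcongr
    _ = r * M * b * μ := by ring

section LotkaVolterra

variable {d₁ d₂ r₁ r₂ b₁ b₂ : ℝ} {φ₁ φ₂ : ℝ → ℝ} {u₁ u₂ : ℝ → ℝ → ℝ}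

theorem IsLVSolution.le_of_le_const {k₁ k₂ : ℝ} (hu : IsLVSolution d₁ d₂ r₁ r₂ b₁ b₂ φ₁ φ₂ u₁ u₂)
    (hd₁ : 0 ≤ d₁) (hd₂ : 0 ≤ d₂) (hr₁ : 0 ≤ r₁) (hr₂ : 0 ≤ r₂) (hb₁ : 0 ≤ b₁) (hb₂ : 0 ≤ b₂)
    (hk₁ : 1 + b₁ * k₂ ≤ k₁) (hk₂ : 1 + b₂ * k₁ ≤ k₂) (hφ₁ : ∀ x, φ₁ x ≤ k₁)
    (hφ₂ : ∀ x, φ₂ x ≤ k₂) (hnn : ∀ t x, 0 ≤ t → 0 ≤ u₁ t x ∧ 0 ≤ u₂ t x)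
    {t : ℝ} (ht : 0 ≤ t) (x : ℝ) : u₁ t x ≤ k₁ ∧ u₂ t x ≤ k₂ := by
  obtain ⟨M₁, hM₁⟩ := hu.reg1.bounded
  obtain ⟨M₂, hM₂⟩ := hu.reg2.bounded
  have hcmp := le_of_cooperative_comparison (u := ![u₁, u₂]) (v := ![fun _ _ => k₁, fun _ _ => k₂])
    (d := ![d₁, d₂]) (C := ![r₁ * M₁ * b₁, r₂ * M₂ * b₂])
    (Fin.forall_fin_two.2 ⟨hd₁, hd₂⟩) (Fin.forall_fin_two.2 ⟨hu.reg1, hu.reg2⟩)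
    (Fin.forall_fin_two.2 ⟨contDiff_const, contDiff_const⟩)
    (Fin.forall_fin_two.2 ⟨⟨k₁, fun _ _ _ => le_rfl⟩, ⟨k₂, fun _ _ _ => le_rfl⟩⟩)
    (Fin.forall_fin_two.2 ⟨fun x => (hu.init1 x).trans_le (hφ₁ x),
      fun x => (hu.init2 x).trans_le (hφ₂ x)⟩) ?_
  · exact ⟨hcmp 0 ht x, hcmp 1 ht x⟩
  intro i s y μ hs hμ hcon hall
  have hall₀ := hall 0
  have hall₁ := hall 1
  fin_cases i <;>
    simp only [Fin.zero_eta, Fin.mk_one, Matrix.cons_val_zero, Matrix.cons_val_one, pdT_const,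
      pdXX_const, mul_zero, sub_zero, zero_add] at hcon hall₀ hall₁ ⊢
  · have := reaction_le_of_contact hr₁ hb₁ hk₁ (hnn s y hs.le).1
      ((le_abs_self _).trans (hM₁ s y hs.le)) hcon hall₁ hμ.le
    linarith [hu.pde1 s y hs]
  · have := reaction_le_of_contact hr₂ hb₂ hk₂ (hnn s y hs.le).2
      ((le_abs_self _).trans (hM₂ s y hs.le)) hcon hall₀ hμ.le
    linarith [hu.pde2 s y hs]

theorem IsLVSolution.pdT_snd_le {k₁ : ℝ} (hu : IsLVSolution d₁ d₂ r₁ r₂ b₁ b₂ φ₁ φ₂ u₁ u₂)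
    (hr₂ : 0 ≤ r₂) (hb₂ : 0 ≤ b₂) (hu₁ : ∀ t x, 0 ≤ t → u₁ t x ≤ k₁)
    (hu₂ : ∀ t x, 0 ≤ t → 0 ≤ u₂ t x) {t : ℝ} (ht : 0 < t) (x : ℝ) :
    pdT u₂ t x ≤ d₂ * pdXX u₂ t x + r₂ * (1 + b₂ * k₁) * u₂ t x := by
  have hfac : 1 - u₂ t x + b₂ * u₁ t x ≤ 1 + b₂ * k₁ := by
    nlinarith [mul_le_mul_of_nonneg_left (hu₁ t x ht.le) hb₂, hu₂ t x ht.le]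
  have := mul_le_mul_of_nonneg_left hfac (mul_nonneg hr₂ (hu₂ t x ht.le))
  linarith [hu.pde2 t x ht]

theorem IsLVSolution.exists_snd_le_mul_exp {k₁ K : ℝ}
    (hu : IsLVSolution d₁ d₂ r₁ r₂ b₁ b₂ φ₁ φ₂ u₁ u₂) (hd₂ : 0 < d₂) (hr₂ : 0 < r₂)
    (hb₂ : 0 ≤ b₂) (hk₁ : 0 ≤ k₁) (hu₁ : ∀ t x, 0 ≤ t → u₁ t x ≤ k₁)
    (hu₂ : ∀ t x, 0 ≤ t → 0 ≤ u₂ t x) (hφ₂ : HasCompactSupport φ₂) (hK : ∀ x, φ₂ x ≤ K) :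
    ∃ κ A, 0 < κ ∧ 0 ≤ A ∧ ∀ t x, 0 ≤ t →
      u₂ t x ≤ A * exp (κ * (2 * sqrt (d₂ * r₂ * (1 + b₂ * k₁)) * t - |x|)) := by
  set c := 2 * sqrt (d₂ * r₂ * (1 + b₂ * k₁))
  -- `κ` minimises the speed `(r₂(1 + b₂k₁) + d₂κ²) / κ` of the barrier; the minimum is `c`
  set κ := c / (2 * d₂)
  have hc : c ^ 2 = 4 * (d₂ * r₂ * (1 + b₂ * k₁)) := by
    rw [mul_pow, sq_sqrt (by positivity)]; ring
  have hκ : 0 < κ := by positivity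
  have hp : r₂ * (1 + b₂ * k₁) + d₂ * κ ^ 2 ≤ κ * c := by
    simp only [κ]
    field_simp
    nlinarith [hc]
  obtain ⟨A, hA, hφA⟩ := hφ₂.exists_le_mul_exp_neg_abs hK hκ.le
  refine ⟨κ, A, hκ, hA, fun t x ht => ?_⟩
  rw [mul_sub, ← mul_assoc]
  exact le_mul_exp_sub_abs_of_pdT_le hd₂.le hu.reg2
    (fun t x ht => hu.pdT_snd_le hr₂.le hb₂ hu₁ hu₂ ht x) hp hκ.le hA
    (fun x => (hu.init2 x).trans_le (hφA x)) ht x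

end LotkaVolterra

theorem second_component_spreading_upper_bound_general
    (d₁ d₂ r₁ r₂ b₁ b₂ : ℝ)
    (hd₁ : 0 < d₁) (hd₂ : 0 < d₂) (hr₁ : 0 < r₁) (hr₂ : 0 < r₂)
    (hb₁ : 0 < b₁) (hb₂ : 0 < b₂) (hbb : b₁ * b₂ < 1)
    (φ₁ φ₂ : ℝ → ℝ)
    (hφ₂supp : HasCompactSupport φ₂)
    (hφ₁ : ∀ x, 0 ≤ φ₁ x ∧ φ₁ x < (1 + b₁) / (1 - b₁ * b₂))
    (hφ₂ : ∀ x, 0 ≤ φ₂ x ∧ φ₂ x < (1 + b₂) / (1 - b₁ * b₂))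
    (u₁ u₂ : ℝ → ℝ → ℝ)
    (hu : IsLVSolution d₁ d₂ r₁ r₂ b₁ b₂ φ₁ φ₂ u₁ u₂)
    (hnn : ∀ t x : ℝ, 0 ≤ t → 0 ≤ u₁ t x ∧ 0 ≤ u₂ t x) :
    (∀ t x : ℝ, 0 ≤ t →
      u₁ t x ≤ (1 + b₁) / (1 - b₁ * b₂) ∧ u₂ t x ≤ (1 + b₂) / (1 - b₁ * b₂)) ∧
    (∀ ε : ℝ, 0 < ε →
      Tendsto (fun t => sSup (u₂ t '' {x : ℝ |
          (2 * Real.sqrt (d₂ * r₂ * ((1 + b₂) / (1 - b₁ * b₂))) + ε) * t ≤ |x|}))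
        atTop (𝓝 0)) := by
  have hb : 0 < 1 - b₁ * b₂ := by linarith
  set k₁ := (1 + b₁) / (1 - b₁ * b₂)
  set k₂ := (1 + b₂) / (1 - b₁ * b₂)
  have hk₁ : 1 + b₁ * k₂ = k₁ := by
    rw [mul_div_assoc', one_add_div hb.ne']; congr 1; ring
  have hk₂ : 1 + b₂ * k₁ = k₂ := by
    rw [mul_div_assoc', one_add_div hb.ne']; congr 1; ring
  have hbound : ∀ t x, 0 ≤ t → u₁ t x ≤ k₁ ∧ u₂ t x ≤ k₂ := fun t x ht =>
    hu.le_of_le_const hd₁.le hd₂.le hr₁.le hr₂.le hb₁.le hb₂.le hk₁.le hk₂.le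
      (fun x => (hφ₁ x).2.le) (fun x => (hφ₂ x).2.le) hnn ht x
  refine ⟨hbound, fun ε hε => ?_⟩
  obtain ⟨κ, A, hκ, hA, hexp⟩ := hu.exists_snd_le_mul_exp hd₂ hr₂ hb₂.le (by positivity)
    (fun t x ht => (hbound t x ht).1) (fun t x ht => (hnn t x ht).2) hφ₂supp
    (fun x => (hφ₂ x).2.le)
  rw [hk₂] at hexp
  set c := 2 * sqrt (d₂ * r₂ * k₂)
  refine tendsto_sSup_image_of_le (g := fun t => A * exp (-(κ * ε * t)))
    (fun t => ⟨|(c + ε) * t|, by simpa using le_abs_self ((c + ε) * t)⟩)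
    ((eventually_ge_atTop 0).mono fun t ht x _ => (hnn t x ht).2)
    ((eventually_ge_atTop 0).mono fun t ht x hx => (hexp t x ht).trans ?_)
    (by simpa using (tendsto_exp_neg_atTop_nhds_zero.comp
      (tendsto_id.const_mul_atTop (mul_pos hκ hε))).const_mul A)
  gcongr
  nlinarith [show (c + ε) * t ≤ |x| from hx]

/-- Remark 3.8: if `d₁r₁ > d₂r₂k₂`, then for compactly supported initial data below
`(k₁,k₂)` the solution stays in `[0,k₁] × [0,k₂]` and the spreading of `u₂` is bounded
above by the speed `2√(d₂r₂k₂)`. -/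
theorem second_component_spreading_upper_bound
    (d₁ d₂ r₁ r₂ b₁ b₂ : ℝ)
    (hd₁ : 0 < d₁) (hd₂ : 0 < d₂) (hr₁ : 0 < r₁) (hr₂ : 0 < r₂)
    (hb₁ : 0 < b₁) (hb₂ : 0 < b₂) (hbb : b₁ * b₂ < 1)
    (hdr : d₂ * r₂ * ((1 + b₂) / (1 - b₁ * b₂)) < d₁ * r₁)
    (φ₁ φ₂ : ℝ → ℝ) (hφ₁c : Continuous φ₁) (hφ₂c : Continuous φ₂)
    (hφ₁supp : HasCompactSupport φ₁) (hφ₂supp : HasCompactSupport φ₂)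
    (hφ₁ : ∀ x, 0 ≤ φ₁ x ∧ φ₁ x < (1 + b₁) / (1 - b₁ * b₂))
    (hφ₂ : ∀ x, 0 ≤ φ₂ x ∧ φ₂ x < (1 + b₂) / (1 - b₁ * b₂))
    (u₁ u₂ : ℝ → ℝ → ℝ)
    (hu : IsLVSolution d₁ d₂ r₁ r₂ b₁ b₂ φ₁ φ₂ u₁ u₂)
    (hnn : ∀ t x : ℝ, 0 ≤ t → 0 ≤ u₁ t x ∧ 0 ≤ u₂ t x) :
    (∀ t x : ℝ, 0 ≤ t →
      u₁ t x ≤ (1 + b₁) / (1 - b₁ * b₂) ∧ u₂ t x ≤ (1 + b₂) / (1 - b₁ * b₂)) ∧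
    (∀ ε : ℝ, 0 < ε →
      Tendsto (fun t => sSup (u₂ t '' {x : ℝ |
          (2 * Real.sqrt (d₂ * r₂ * ((1 + b₂) / (1 - b₁ * b₂))) + ε) * t ≤ |x|}))
        atTop (𝓝 0)) :=
  second_component_spreading_upper_bound_general d₁ d₂ r₁ r₂ b₁ b₂ hd₁ hd₂ hr₁ hr₂ hb₁ hb₂ hbb φ₁ φ₂
    hφ₂supp hφ₁ hφ₂ u₁ u₂ hu hnn
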